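/- arXiv:1301.6229 — 4 statements merged into one kernel-verified Lean document; each statement's English description precedes it below -/
import Mathlib

section
/- For all real r in [0, π], the quantity r·sin(2r) + 3·cos(2r) + 4·r² − 3 is nonnegative. -/
open Real

lemma key_aux : ∀ x : ℝ, 0 ≤ x →
    0 ≤ 4 * x - 5 * Real.sin x + Real.sin x * Real.cos x := by
  have hm : Monotone (fun x : ℝ => 4 * x - 5 * Real.sin x + Real.sin x * Real.cos x) := by
    apply monotone_of_deriv_nonneg
    · fun_prop
    · intro x
      have hd : HasDerivAt (fun x : ℝ => 4 * x - 5 * Real.sin x + Real.sin x * Real.cos x)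
          (4 * 1 - 5 * Real.cos x +
            (Real.cos x * Real.cos x + Real.sin x * (-Real.sin x))) x := by
        exact (((hasDerivAt_id x).const_mul 4).sub ((Real.hasDerivAt_sin x).const_mul 5)).add
          ((Real.hasDerivAt_sin x).mul (Real.hasDerivAt_cos x))
      rw [hd.deriv]
      have h1 := Real.cos_le_one x
      have h2 := Real.sin_sq_add_cos_sq x
      nlinarith [sq_nonneg (Real.cos x - 1)]
  intro x hx
  have := hm hx
  simpa using this

theorem stmt2 :
    ∀ r ∈ Set.Icc (0:ℝ) π,
      0 ≤ r * Real.sin (2 * r) + 3 * Real.cos (2 * r) + 4 * r ^ 2 - 3 := by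
  intro r hr
  obtain ⟨h0, hπ⟩ := hr
  have hs : 0 ≤ Real.sin r := Real.sin_nonneg_of_nonneg_of_le_pi h0 hπ
  have hk := key_aux r h0
  rw [Real.sin_two_mul, Real.cos_two_mul]
  have h2 := Real.sin_sq_add_cos_sq r
  nlinarith [sq_nonneg (Real.sin r), sq_nonneg (4 * r + Real.sin r * Real.cos r - 5 * Real.sin r),
    mul_nonneg hs hs, sq_nonneg (Real.sin r * Real.sin r)]
end

section
/- For all real r in [0, π], the inequality 2(r² − r·sin r·cos r) ≥ 3(sin² r − r·sin r·cos r) holds. -/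
/-!
Writing `t = 2r`, the inequality becomes `6 (1 - cos t) ≤ t (2t + sin t)`, which is even in `t`.
On `[0, π]` it is the last of a chain of four inequalities, each of which follows from the
previous one because its difference of sides vanishes at `0` and has the previous difference as
derivative; the chain starts from `(sin t - t cos t)' = t sin t ≥ 0`.
For `t ≥ π` the crude bound `t (2t - 1) ≥ 12` suffices.
-/

open Real Set

theorem nonneg_of_hasDerivAt_nonneg_on_Icc {f f' : ℝ → ℝ} {b x : ℝ}
    (hf : ∀ y, HasDerivAt f (f' y) y) (hf' : ∀ y ∈ Ioo 0 b, 0 ≤ f' y) (hf0 : 0 ≤ f 0)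
    (hx : x ∈ Icc 0 b) : 0 ≤ f x := by
  have hmono : MonotoneOn f (Icc 0 b) :=
    monotoneOn_of_hasDerivWithinAt_nonneg (convex_Icc 0 b)
      (HasDerivAt.continuousOn fun y _ ↦ hf y) (fun y _ ↦ (hf y).hasDerivWithinAt)
      (by rwa [interior_Icc])
  exact hf0.trans (hmono ⟨le_rfl, hx.1.trans hx.2⟩ hx hx.1)

theorem mul_cos_le_sin {x : ℝ} (hx : x ∈ Icc 0 π) : x * cos x ≤ sin x := by
  have hderiv (y : ℝ) : HasDerivAt (fun x ↦ sin x - x * cos x) (y * sin y) y :=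
    ((hasDerivAt_sin y).sub ((hasDerivAt_id' y).mul (hasDerivAt_cos y))).congr_deriv (by ring)
  have := nonneg_of_hasDerivAt_nonneg_on_Icc hderiv
    (fun y hy ↦ mul_nonneg hy.1.le (sin_nonneg_of_nonneg_of_le_pi hy.1.le hy.2.le)) (by simp) hx
  linarith

theorem mul_sin_le_four_mul_one_sub_cos {x : ℝ} (hx : x ∈ Icc 0 π) :
    x * sin x ≤ 4 * (1 - cos x) := by
  have hderiv (y : ℝ) :
      HasDerivAt (fun x ↦ 4 * (1 - cos x) - x * sin x) (2 * sin y + (sin y - y * cos y)) y :=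
    (((hasDerivAt_cos y).const_sub 1).const_mul 4 |>.sub
      ((hasDerivAt_id' y).mul (hasDerivAt_sin y))).congr_deriv (by ring)
  have := nonneg_of_hasDerivAt_nonneg_on_Icc hderiv
    (fun y hy ↦ add_nonneg
      (mul_nonneg zero_le_two (sin_nonneg_of_nonneg_of_le_pi hy.1.le hy.2.le))
      (sub_nonneg.2 (mul_cos_le_sin (Ioo_subset_Icc_self hy)))) (by simp) hx
  linarith

theorem five_mul_sin_le {x : ℝ} (hx : x ∈ Icc 0 π) : 5 * sin x ≤ x * (4 + cos x) := by
  have hderiv (y : ℝ) :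
      HasDerivAt (fun x ↦ x * (4 + cos x) - 5 * sin x) (4 * (1 - cos y) - y * sin y) y :=
    (((hasDerivAt_id' y).mul ((hasDerivAt_cos y).const_add 4)).sub
      ((hasDerivAt_sin y).const_mul 5)).congr_deriv (by ring)
  have := nonneg_of_hasDerivAt_nonneg_on_Icc hderiv
    (fun y hy ↦ sub_nonneg.2 (mul_sin_le_four_mul_one_sub_cos (Ioo_subset_Icc_self hy)))
    (by simp) hx
  linarith

theorem six_mul_one_sub_cos_le_of_mem_Icc {x : ℝ} (hx : x ∈ Icc 0 π) :
    6 * (1 - cos x) ≤ x * (2 * x + sin x) := by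
  have hderiv (y : ℝ) :
      HasDerivAt (fun x ↦ x * (2 * x + sin x) - 6 * (1 - cos x))
        (y * (4 + cos y) - 5 * sin y) y :=
    (((hasDerivAt_id' y).mul (((hasDerivAt_id' y).const_mul 2).add (hasDerivAt_sin y))).sub
      (((hasDerivAt_cos y).const_sub 1).const_mul 6)).congr_deriv
        (by simp only [Pi.add_apply]; ring)
  have := nonneg_of_hasDerivAt_nonneg_on_Icc hderiv
    (fun y hy ↦ sub_nonneg.2 (five_mul_sin_le (Ioo_subset_Icc_self hy))) (by simp) hx
  linarith

theorem six_mul_one_sub_cos_le (x : ℝ) : 6 * (1 - cos x) ≤ x * (2 * x + sin x) := by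
  wlog hx : 0 ≤ x generalizing x
  · have h := this (-x) (by linarith)
    rw [cos_neg, sin_neg] at h
    linarith
  rcases le_total x π with hxπ | hπx
  · exact six_mul_one_sub_cos_le_of_mem_Icc ⟨hx, hxπ⟩
  · nlinarith [pi_gt_three, neg_one_le_sin x, cos_le_one x, neg_one_le_cos x]

theorem stmt3 :
    ∀ r ∈ Set.Icc (0:ℝ) π,
      2 * (r ^ 2 - r * Real.sin r * Real.cos r) ≥
        3 * (Real.sin r ^ 2 - r * Real.sin r * Real.cos r) := by
  intro r _
  have h := six_mul_one_sub_cos_le (2 * r)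
  rw [sin_two_mul, cos_two_mul, cos_sq'] at h
  linarith
end

section
/- Let c, t, α, β be real parameters with α, β > 0, and define r(t) = sqrt(α² + t²β²) (so that r(t) = |α·e₁ + tβ·e₂| for orthogonal α·e₁ and tβ·e₂). Suppose |c| ≤ α and |c| ≤ r. Define G(r) = (1 − r·cos r/sin r)·(1 − c²/r²) and F(t) = G(r(t)). Then there exists a universal constant C₀ > 0 such that whenever r(t) ∈ (0, π), d²F/dt²(t) ≥ C₀·β². -/
/-!
Put `r = √(α² + t²β²)`, so that `r' = tβ²/r` and `r'' = α²β²/r³`. With `w = α²/r² ∈ [0, 1]` the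
chain rule gives `F'' = G''(r) r'² + G'(r) r'' = β² (G''(r) (1 - w) + G'(r) w / r)`.
Write `G = P · (1 - m)` with `P x = 1 - x cot x` and `m = c²/x² ≤ w`. On `(0, π)` we have
`P'' ≥ 2/3`, `P'/x ≥ 2/3`, `P/x² ≥ 1/3` and `3 P/x² ≤ 2 P'/x`. Each of these reduces to a
trigonometric inequality that holds because the difference of its two sides vanishes at `0` and is
nondecreasing on `[0, π]`. Regrouping the bracket along these four quantities bounds it below by
`2/3 (1 - m + m w) ≥ 2/3 (1 - m + m²) ≥ 1/2`, so `C₀ = 1/2` works.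
-/

open Real Set Filter Topology

lemma nonneg_of_hasDerivAt_nonneg {f f' : ℝ → ℝ} {a b x : ℝ}
    (hf : ∀ y ∈ Icc a b, HasDerivAt f (f' y) y) (hf' : ∀ y ∈ Icc a b, 0 ≤ f' y) (ha : 0 ≤ f a)
    (hx : x ∈ Icc a b) : 0 ≤ f x := by
  have hmono : MonotoneOn f (Icc a b) := by
    refine monotoneOn_of_hasDerivWithinAt_nonneg (convex_Icc a b)
      (fun y hy => (hf y hy).continuousAt.continuousWithinAt) (fun y hy => ?_)
      (fun y hy => hf' y (interior_subset hy))
    exact (hf y (interior_subset hy)).hasDerivWithinAt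
  exact ha.trans (hmono (left_mem_Icc.2 (hx.1.trans hx.2)) hx hx.1)

lemma sin_sub_mul_cos_nonneg {x : ℝ} (hx : x ∈ Icc 0 π) : 0 ≤ sin x - x * cos x := by
  refine nonneg_of_hasDerivAt_nonneg (f := fun y => sin y - y * cos y) (f' := fun y => y * sin y)
    (fun y _ => ?_) (fun y hy => mul_nonneg hy.1 (sin_nonneg_of_nonneg_of_le_pi hy.1 hy.2))
    (by simp) hx
  exact ((hasDerivAt_sin y).sub (hasDerivAt_id' .. |>.mul (hasDerivAt_cos y))).congr_deriv (by ring)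

lemma mul_sin_sq_le_sub_sin_mul_cos {x : ℝ} (hx : x ∈ Icc 0 π) :
    2 / 3 * x * sin x ^ 2 ≤ x - sin x * cos x := by
  rw [← sub_nonneg]
  refine nonneg_of_hasDerivAt_nonneg (f := fun y => y - sin y * cos y - 2 / 3 * y * sin y ^ 2)
    (f' := fun y => 4 / 3 * sin y * (sin y - y * cos y)) (fun y _ => ?_) (fun y hy => ?_)
    (by simp) hx
  · exact ((hasDerivAt_id' ..).sub ((hasDerivAt_sin y).mul (hasDerivAt_cos y)) |>.sub
      (((hasDerivAt_id' ..).const_mul (2 / 3 : ℝ)).mul ((hasDerivAt_sin y).pow 2))).congr_deriv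
      (by simp only [Pi.pow_apply]; push_cast; linear_combination -sin_sq_add_cos_sq y)
  · have := mul_nonneg (sin_nonneg_of_nonneg_of_le_pi hy.1 hy.2) (sin_sub_mul_cos_nonneg hy)
    linarith

lemma sq_mul_sin_le_sin_sub_mul_cos {x : ℝ} (hx : x ∈ Icc 0 π) :
    x ^ 2 / 3 * sin x ≤ sin x - x * cos x := by
  rw [← sub_nonneg]
  refine nonneg_of_hasDerivAt_nonneg (f := fun y => sin y - y * cos y - y ^ 2 / 3 * sin y)
    (f' := fun y => y / 3 * (sin y - y * cos y)) (fun y _ => ?_)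
    (fun y hy => mul_nonneg (by linarith [hy.1]) (sin_sub_mul_cos_nonneg hy)) (by simp) hx
  exact ((hasDerivAt_sin y).sub ((hasDerivAt_id' ..).mul (hasDerivAt_cos y)) |>.sub
    (((hasDerivAt_pow 2 y).div_const 3).mul (hasDerivAt_sin y))).congr_deriv (by push_cast; ring)

lemma sin_pow_three_le_sin_sub_mul_cos {x : ℝ} (hx : x ∈ Icc 0 π) :
    sin x ^ 3 / 3 ≤ sin x - x * cos x := by
  rw [← sub_nonneg]
  refine nonneg_of_hasDerivAt_nonneg (f := fun y => sin y - y * cos y - sin y ^ 3 / 3)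
    (f' := fun y => sin y * (y - sin y * cos y)) (fun y _ => ?_) (fun y hy => ?_) (by simp) hx
  · exact ((hasDerivAt_sin y).sub ((hasDerivAt_id' ..).mul (hasDerivAt_cos y)) |>.sub
      (((hasDerivAt_sin y).pow 3).div_const 3)).congr_deriv (by push_cast; ring)
  · have hs := sin_nonneg_of_nonneg_of_le_pi hy.1 hy.2
    have := (mul_le_of_le_one_right hs (cos_le_one y)).trans (sin_le hy.1)
    exact mul_nonneg hs (by linarith)

lemma five_mul_sin_mul_cos_le {x : ℝ} (hx : x ∈ Icc 0 π) :
    5 * sin x * cos x ≤ 4 * x + x * cos x ^ 2 - x * sin x ^ 2 := by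
  rw [← sub_nonneg]
  refine nonneg_of_hasDerivAt_nonneg
    (f := fun y => 4 * y + y * cos y ^ 2 - y * sin y ^ 2 - 5 * sin y * cos y)
    (f' := fun y => 4 * sin y * (sin y + (sin y - y * cos y))) (fun y _ => ?_) (fun y hy => ?_)
    (by simp) hx
  · exact ((((hasDerivAt_id' ..).const_mul 4).add
      ((hasDerivAt_id' ..).mul ((hasDerivAt_cos y).pow 2))).sub
      ((hasDerivAt_id' ..).mul ((hasDerivAt_sin y).pow 2)) |>.sub
      (((hasDerivAt_sin y).const_mul 5).mul (hasDerivAt_cos y))).congr_deriv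
      (by simp only [Pi.pow_apply]; push_cast; linear_combination (-4 : ℝ) * sin_sq_add_cos_sq y)
  · have hs := sin_nonneg_of_nonneg_of_le_pi hy.1 hy.2
    exact mul_nonneg (by linarith) (by linarith [sin_sub_mul_cos_nonneg hy])

/-- Equivalently, `x sin 2x + 3 cos 2x + 4x² - 3 ≥ 0`. -/
lemma three_mul_sin_sq_le {x : ℝ} (hx : x ∈ Icc 0 π) :
    3 * sin x ^ 2 ≤ 2 * x ^ 2 + x * sin x * cos x := by
  rw [← sub_nonneg]
  refine nonneg_of_hasDerivAt_nonneg
    (f := fun y => 2 * y ^ 2 + y * sin y * cos y - 3 * sin y ^ 2)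
    (f' := fun y => 4 * y + y * cos y ^ 2 - y * sin y ^ 2 - 5 * sin y * cos y) (fun y _ => ?_)
    (fun y hy => sub_nonneg.2 (five_mul_sin_mul_cos_le hy)) (by simp) hx
  exact (((hasDerivAt_pow 2 y).const_mul 2).add
      (((hasDerivAt_id' ..).mul (hasDerivAt_sin y)).mul (hasDerivAt_cos y)) |>.sub
      (((hasDerivAt_sin y).pow 2).const_mul 3)).congr_deriv
      (by simp only [Pi.mul_apply]; push_cast; ring)

lemma deriv_deriv_comp_eq {g g' R R' : ℝ → ℝ} {S : Set ℝ} {t a b : ℝ} (hS : IsOpen S)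
    (hg : ∀ x ∈ S, HasDerivAt g (g' x) x) (hg' : HasDerivAt g' a (R t))
    (hR : ∀ s, HasDerivAt R (R' s) s) (hR' : HasDerivAt R' b t) (ht : R t ∈ S) :
    deriv (deriv fun s => g (R s)) t = a * R' t ^ 2 + g' (R t) * b := by
  have hRc : Continuous R := continuous_iff_continuousAt.2 fun s => (hR s).continuousAt
  have hderiv : deriv (fun s => g (R s)) =ᶠ[𝓝 t] fun s => g' (R s) * R' s := by
    filter_upwards [hRc.continuousAt.preimage_mem_nhds (hS.mem_nhds ht)] with s hs
    exact ((hg _ hs).comp s (hR s)).deriv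
  rw [hderiv.deriv_eq]
  exact ((hg'.comp t (hR t)).mul hR').deriv.trans (by rw [Function.comp_apply]; ring)

lemma hasDerivAt_sqrt_sq_add_sq_mul {α : ℝ} (β s : ℝ) (hα : α ≠ 0) :
    HasDerivAt (fun s => √(α ^ 2 + s ^ 2 * β ^ 2)) (s * β ^ 2 / √(α ^ 2 + s ^ 2 * β ^ 2)) s := by
  have hpos : 0 < α ^ 2 + s ^ 2 * β ^ 2 := by positivity
  refine (((hasDerivAt_pow 2 s).mul_const (β ^ 2)).const_add (α ^ 2)).sqrt hpos.ne'
    |>.congr_deriv ?_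
  field_simp
  push_cast
  ring

lemma hasDerivAt_mul_div_sqrt_sq_add_sq_mul {α : ℝ} (β s : ℝ) (hα : α ≠ 0) :
    HasDerivAt (fun s => s * β ^ 2 / √(α ^ 2 + s ^ 2 * β ^ 2))
      (α ^ 2 * β ^ 2 / √(α ^ 2 + s ^ 2 * β ^ 2) ^ 3) s := by
  have hpos : 0 < α ^ 2 + s ^ 2 * β ^ 2 := by positivity
  have hr := (sqrt_pos.2 hpos).ne'
  have hsq := sq_sqrt hpos.le
  refine ((hasDerivAt_mul_const (β ^ 2)).div (hasDerivAt_sqrt_sq_add_sq_mul β s hα) hr)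
    |>.congr_deriv ?_
  set r := √(α ^ 2 + s ^ 2 * β ^ 2)
  field_simp
  linear_combination β ^ 2 * hsq

namespace SphereCost

noncomputable def P (x : ℝ) : ℝ := 1 - x * cos x / sin x

noncomputable def dP (x : ℝ) : ℝ := (x - sin x * cos x) / sin x ^ 2

noncomputable def d2P (x : ℝ) : ℝ := 2 * (sin x - x * cos x) / sin x ^ 3

noncomputable def G (c x : ℝ) : ℝ := P x * (1 - c ^ 2 / x ^ 2)

noncomputable def dG (c x : ℝ) : ℝ := dP x * (1 - c ^ 2 / x ^ 2) + P x * (2 * c ^ 2 / x ^ 3)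

noncomputable def d2G (c x : ℝ) : ℝ :=
  d2P x * (1 - c ^ 2 / x ^ 2) + 2 * dP x * (2 * c ^ 2 / x ^ 3) + P x * (-6 * c ^ 2 / x ^ 4)

variable {x : ℝ}

lemma hasDerivAt_P (hx : sin x ≠ 0) : HasDerivAt P (dP x) x := by
  refine ((hasDerivAt_const x 1).sub (((hasDerivAt_id' x).mul (hasDerivAt_cos x)).div
    (hasDerivAt_sin x) hx)).congr_deriv ?_
  rw [dP]
  simp only [Pi.mul_apply]
  field_simp
  linear_combination x * sin_sq_add_cos_sq x

lemma hasDerivAt_dP (hx : sin x ≠ 0) : HasDerivAt dP (d2P x) x := by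
  refine (((hasDerivAt_id' x).sub ((hasDerivAt_sin x).mul (hasDerivAt_cos x))).div
    ((hasDerivAt_sin x).pow 2) (pow_ne_zero 2 hx)).congr_deriv ?_
  rw [d2P]
  simp only [Pi.sub_apply, Pi.mul_apply, Pi.pow_apply]
  field_simp
  push_cast
  linear_combination sin x ^ 2 * sin_sq_add_cos_sq x

lemma hasDerivAt_G (c : ℝ) (hx : sin x ≠ 0) : HasDerivAt (G c) (dG c x) x := by
  have hx0 : x ≠ 0 := fun h => hx (h ▸ sin_zero)
  refine ((hasDerivAt_P hx).mul ((hasDerivAt_const x 1).sub ((hasDerivAt_const x (c ^ 2)).div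
    (hasDerivAt_pow 2 x) (pow_ne_zero 2 hx0)))).congr_deriv ?_
  rw [dG]
  simp only [Pi.sub_apply, Pi.div_apply]
  field_simp
  ring

lemma hasDerivAt_dG (c : ℝ) (hx : sin x ≠ 0) : HasDerivAt (dG c) (d2G c x) x := by
  have hx0 : x ≠ 0 := fun h => hx (h ▸ sin_zero)
  have hQ : HasDerivAt (fun y => 1 - c ^ 2 / y ^ 2) (2 * c ^ 2 / x ^ 3) x :=
    ((hasDerivAt_const x 1).sub ((hasDerivAt_const x (c ^ 2)).div
      (hasDerivAt_pow 2 x) (pow_ne_zero 2 hx0))).congr_deriv (by field_simp; ring)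
  have hdQ : HasDerivAt (fun y => 2 * c ^ 2 / y ^ 3) (-6 * c ^ 2 / x ^ 4) x :=
    ((hasDerivAt_const x (2 * c ^ 2)).div (hasDerivAt_pow 3 x) (pow_ne_zero 3 hx0)).congr_deriv
      (by field_simp; ring)
  exact (((hasDerivAt_dP hx).mul hQ).add ((hasDerivAt_P hx).mul hdQ)).congr_deriv
    (by rw [d2G]; ring)

lemma P_eq_div (hx : sin x ≠ 0) : P x = (sin x - x * cos x) / sin x := by
  rw [P]; field_simp

lemma two_thirds_le_d2P (hx : x ∈ Ioo 0 π) : 2 / 3 ≤ d2P x := by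
  have hs := sin_pos_of_pos_of_lt_pi hx.1 hx.2
  rw [d2P, le_div_iff₀ (by positivity)]
  linarith [sin_pow_three_le_sin_sub_mul_cos (Ioo_subset_Icc_self hx)]

lemma two_thirds_le_dP_div (hx : x ∈ Ioo 0 π) : 2 / 3 ≤ dP x / x := by
  have hs := sin_pos_of_pos_of_lt_pi hx.1 hx.2
  rw [dP, div_div, le_div_iff₀ (mul_pos (by positivity) hx.1)]
  linarith [mul_sin_sq_le_sub_sin_mul_cos (Ioo_subset_Icc_self hx)]

lemma one_third_le_P_div_sq (hx : x ∈ Ioo 0 π) : 1 / 3 ≤ P x / x ^ 2 := by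
  have hs := sin_pos_of_pos_of_lt_pi hx.1 hx.2
  rw [P_eq_div hs.ne', div_div, le_div_iff₀ (mul_pos hs (pow_pos hx.1 2))]
  linarith [sq_mul_sin_le_sin_sub_mul_cos (Ioo_subset_Icc_self hx)]

lemma three_mul_P_div_sq_le (hx : x ∈ Ioo 0 π) : 3 * (P x / x ^ 2) ≤ 2 * (dP x / x) := by
  have hs := sin_pos_of_pos_of_lt_pi hx.1 hx.2
  have hx0 := hx.1.ne'
  have key : 2 * (dP x / x) - 3 * (P x / x ^ 2)
      = (2 * x ^ 2 + x * sin x * cos x - 3 * sin x ^ 2) / (x ^ 2 * sin x ^ 2) := by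
    rw [dP, P_eq_div hs.ne']
    field_simp
    ring
  have := three_mul_sin_sq_le (Ioo_subset_Icc_self hx)
  rw [← sub_nonneg, key]
  exact div_nonneg (by linarith) (by positivity)

lemma half_le_d2G_mul_add_dG_mul {c a : ℝ} (hx : x ∈ Ioo 0 π) (hca : c ^ 2 ≤ a ^ 2)
    (hax : a ^ 2 ≤ x ^ 2) :
    1 / 2 ≤ d2G c x * (1 - a ^ 2 / x ^ 2) + dG c x * (a ^ 2 / x ^ 2) / x := by
  have hx0 := hx.1.ne'
  set m := c ^ 2 / x ^ 2
  set w := a ^ 2 / x ^ 2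
  have hm : 0 ≤ m := by positivity
  have hmw : m ≤ w := div_le_div_of_nonneg_right hca (sq_nonneg x)
  have hw : w ≤ 1 := div_le_one_of_le₀ hax (sq_nonneg x)
  have key : d2G c x * (1 - w) + dG c x * w / x
      = d2P x * ((1 - m) * (1 - w)) + 2 * (2 * (dP x / x) - 3 * (P x / x ^ 2)) * (m * (1 - w))
        + dP x / x * ((1 - m) * w) + 2 * (P x / x ^ 2) * (m * w) := by
    simp only [d2G, dG, m, w]
    field_simp
    ring
  rw [key]
  have h2 : 2 / 3 * ((1 - m) * (1 - w)) ≤ d2P x * ((1 - m) * (1 - w)) :=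
    mul_le_mul_of_nonneg_right (two_thirds_le_d2P hx) (by nlinarith)
  have h1 : 2 / 3 * ((1 - m) * w) ≤ dP x / x * ((1 - m) * w) :=
    mul_le_mul_of_nonneg_right (two_thirds_le_dP_div hx) (by nlinarith)
  have h0 : 1 / 3 * (m * w) ≤ P x / x ^ 2 * (m * w) :=
    mul_le_mul_of_nonneg_right (one_third_le_P_div_sq hx) (by positivity)
  have h10 : 0 ≤ (2 * (dP x / x) - 3 * (P x / x ^ 2)) * (m * (1 - w)) :=
    mul_nonneg (sub_nonneg.2 (three_mul_P_div_sq_le hx)) (by nlinarith)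
  nlinarith [mul_le_mul_of_nonneg_left hmw hm, sq_nonneg (m - 1 / 2)]

end SphereCost

open SphereCost in
theorem stmt7 :
    ∃ C₀ : ℝ, 0 < C₀ ∧
      ∀ (c α β : ℝ), 0 < α → 0 < β → |c| ≤ α →
        ∀ t : ℝ, Real.sqrt (α ^ 2 + t ^ 2 * β ^ 2) ∈ Set.Ioo 0 π →
          deriv (deriv (fun s : ℝ =>
            (1 - Real.sqrt (α ^ 2 + s ^ 2 * β ^ 2) *
                Real.cos (Real.sqrt (α ^ 2 + s ^ 2 * β ^ 2)) /
                Real.sin (Real.sqrt (α ^ 2 + s ^ 2 * β ^ 2))) *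
              (1 - c ^ 2 / Real.sqrt (α ^ 2 + s ^ 2 * β ^ 2) ^ 2))) t
            ≥ C₀ * β ^ 2 := by
  refine ⟨1 / 2, by norm_num, fun c α β hα _ hc t hr => ?_⟩
  have hsin : ∀ x ∈ Ioo 0 π, sin x ≠ 0 := fun x hx => (sin_pos_of_pos_of_lt_pi hx.1 hx.2).ne'
  have hF := deriv_deriv_comp_eq (g := G c) (R := fun s => √(α ^ 2 + s ^ 2 * β ^ 2)) isOpen_Ioo
    (fun x hx => hasDerivAt_G c (hsin x hx)) (hasDerivAt_dG c (hsin _ hr))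
    (hasDerivAt_sqrt_sq_add_sq_mul β · hα.ne') (hasDerivAt_mul_div_sqrt_sq_add_sq_mul β t hα.ne') hr
  set r := √(α ^ 2 + t ^ 2 * β ^ 2)
  have hr2 : r ^ 2 = α ^ 2 + t ^ 2 * β ^ 2 := sq_sqrt (by positivity)
  have hca : c ^ 2 ≤ α ^ 2 := sq_le_sq.2 (hc.trans (le_abs_self α))
  have hbound := half_le_d2G_mul_add_dG_mul hr hca (hr2 ▸ le_add_of_nonneg_right (by positivity))
  calc 1 / 2 * β ^ 2
      ≤ β ^ 2 * (d2G c r * (1 - α ^ 2 / r ^ 2) + dG c r * (α ^ 2 / r ^ 2) / r) := by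
        rw [mul_comm]; exact mul_le_mul_of_nonneg_left hbound (sq_nonneg β)
    _ = d2G c r * (t * β ^ 2 / r) ^ 2 + dG c r * (α ^ 2 * β ^ 2 / r ^ 3) := by
      have hr0 : r ≠ 0 := hr.1.ne'
      field_simp
      linear_combination d2G c r * r * hr2
    _ = _ := hF.symm
end

section
/- Let T : S^{n−1} → S^{n−1} satisfy the 2-monotonicity inequality c(x₁, T(x₁)) + c(x₂, T(x₂)) ≤ c(x₂, T(x₁)) + c(x₁, T(x₂)) for all x₁, x₂, where c(x,y) = −log|x − y|. Then for all x₁, x₂ with the relevant quantities finite: |x₁ − T(x₂)| ≤ 2·|x₁ − T(x₁)| / |x₂ − T(x₁)|. -/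
theorem stmt10 (n : ℕ) (T : EuclideanSpace ℝ (Fin n) → EuclideanSpace ℝ (Fin n))
    (hT : ∀ x, ‖x‖ = 1 → ‖T x‖ = 1)
    (hmono : ∀ x₁ x₂ : EuclideanSpace ℝ (Fin n), ‖x₁‖ = 1 → ‖x₂‖ = 1 →
      (-Real.log ‖x₁ - T x₁‖) + (-Real.log ‖x₂ - T x₂‖) ≤
        (-Real.log ‖x₂ - T x₁‖) + (-Real.log ‖x₁ - T x₂‖))
    (x₁ x₂ : EuclideanSpace ℝ (Fin n)) (hx₁ : ‖x₁‖ = 1) (hx₂ : ‖x₂‖ = 1)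
    (h₁ : x₁ ≠ T x₁) (h₂ : x₂ ≠ T x₂) (h₃ : x₂ ≠ T x₁) (h₄ : x₁ ≠ T x₂) :
    ‖x₁ - T x₂‖ ≤ 2 * ‖x₁ - T x₁‖ / ‖x₂ - T x₁‖ := by
  set a := ‖x₁ - T x₁‖ with ha
  set b := ‖x₂ - T x₂‖ with hb
  set c := ‖x₂ - T x₁‖ with hc
  set d := ‖x₁ - T x₂‖ with hd
  have hap : 0 < a := norm_pos_iff.mpr (sub_ne_zero.mpr h₁)
  have hbp : 0 < b := norm_pos_iff.mpr (sub_ne_zero.mpr h₂)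
  have hcp : 0 < c := norm_pos_iff.mpr (sub_ne_zero.mpr h₃)
  have hdp : 0 < d := norm_pos_iff.mpr (sub_ne_zero.mpr h₄)
  have hb2 : b ≤ 2 := by
    calc b ≤ ‖x₂‖ + ‖T x₂‖ := norm_sub_le _ _
    _ = 2 := by rw [hx₂, hT x₂ hx₂]; norm_num
  have hlog := hmono x₁ x₂ hx₁ hx₂
  have hlog2 : Real.log (c * d) ≤ Real.log (a * b) := by
    rw [Real.log_mul hcp.ne' hdp.ne', Real.log_mul hap.ne' hbp.ne']
    linarith
  have hcd : c * d ≤ a * b :=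
    (Real.log_le_log_iff (by positivity) (by positivity)).mp hlog2
  rw [le_div_iff₀ hcp]
  nlinarith
end
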